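/- arXiv:2003.02496 — 2 statements merged into one kernel-verified Lean document; each statement's English description precedes it below -/
import Mathlib

section
/- The endomorphisms β̃_i satisfy the braid relation: for each i with 1 ≤ i ≤ n−2, β̃_i ∘ β̃_{i+1} ∘ β̃_i = β̃_{i+1} ∘ β̃_i ∘ β̃_{i+1} as endomorphisms of E. -/
/-- The free group `E` on the generators `e_{k,j}`, `k = 0,1,…,n`, `j ∈ ℤ/dℤ`,
of the covering groupoid of the `d`-fold branched cover over a disk with `n`
branch points. -/
abbrev Egrp (n d : ℕ) : Type := FreeGroup (Fin (n + 1) × ZMod d)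

open Fin.NatCast in
/-- The generator `e_{k,j}` of `E` (first index read as a natural number). -/
def eGen (n d : ℕ) (k : ℕ) (j : ZMod d) : Egrp n d :=
  FreeGroup.of ((k : Fin (n + 1)), j)

/-- The lift `β̃_i` of the half Dehn twist `β_i`, as an endomorphism of the
free group `E`, defined on generators by
`e_{i−1,j} ↦ e_{i−1,j}·e_{i,j+1}`, `e_{i,j} ↦ e_{i,j+1}⁻¹`,
`e_{i+1,j} ↦ e_{i,j}·e_{i+1,j}`, and fixing all other generators. -/
def betaTilde (n d : ℕ) (i : ℕ) : Egrp n d →* Egrp n d :=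
  FreeGroup.lift fun p =>
    if (p.1 : ℕ) + 1 = i then
      FreeGroup.of p * eGen n d i (p.2 + 1)
    else if (p.1 : ℕ) = i then
      (FreeGroup.of (p.1, p.2 + 1))⁻¹
    else if (p.1 : ℕ) = i + 1 then
      eGen n d i p.2 * FreeGroup.of p
    else
      FreeGroup.of p

/-! Both sides are endomorphisms of a free group, so it suffices to compare them on the
generators `e_{k,j}`. Neither side moves `e_{k,j}` unless `i - 1 ≤ k ≤ i + 2`, and in each of
those four cases the two images are words in the `e_{·,·}` that agree after free reduction. -/

section

variable {n d : ℕ}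

lemma eGen_val (k : Fin (n + 1)) (j : ZMod d) : eGen n d k j = FreeGroup.of (k, j) := by
  simp [eGen]

lemma betaTilde_eGen (i : ℕ) {k : ℕ} (hk : k ≤ n) (j : ZMod d) :
    betaTilde n d i (eGen n d k j) =
      if k + 1 = i then eGen n d k j * eGen n d i (j + 1)
      else if k = i then (eGen n d k (j + 1))⁻¹
      else if k = i + 1 then eGen n d i j * eGen n d k j
      else eGen n d k j := by
  simp only [betaTilde, eGen, FreeGroup.lift_apply_of, Fin.val_cast_of_lt (Nat.lt_succ_of_le hk)]

lemma betaTilde_eGen_pred {k : ℕ} (hk : k + 1 ≤ n) (j : ZMod d) :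
    betaTilde n d (k + 1) (eGen n d k j) = eGen n d k j * eGen n d (k + 1) (j + 1) := by
  simp [betaTilde_eGen (k + 1) (Nat.le_of_succ_le hk)]

lemma betaTilde_eGen_self {k : ℕ} (hk : k ≤ n) (j : ZMod d) :
    betaTilde n d k (eGen n d k j) = (eGen n d k (j + 1))⁻¹ := by
  simp [betaTilde_eGen k hk]

lemma betaTilde_eGen_succ {k : ℕ} (hk : k + 1 ≤ n) (j : ZMod d) :
    betaTilde n d k (eGen n d (k + 1) j) = eGen n d k j * eGen n d (k + 1) j := by
  simp [betaTilde_eGen k hk, show k + 1 + 1 ≠ k by omega]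

lemma betaTilde_eGen_of_ne {i k : ℕ} (hk : k ≤ n) (h_pred : k + 1 ≠ i) (h_self : k ≠ i)
    (h_succ : k ≠ i + 1) (j : ZMod d) :
    betaTilde n d i (eGen n d k j) = eGen n d k j := by
  simp [betaTilde_eGen i hk, h_pred, h_self, h_succ]

lemma betaTilde_braid_eGen {i k : ℕ} (hi : i + 1 ≤ n) (hk : k ≤ n) (j : ZMod d) :
    betaTilde n d i (betaTilde n d (i + 1) (betaTilde n d i (eGen n d k j))) =
      betaTilde n d (i + 1) (betaTilde n d i (betaTilde n d (i + 1) (eGen n d k j))) := by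
  obtain rfl | rfl | rfl | rfl | ⟨h_pred, h_self, h_succ, h_succ_succ⟩ :
      k + 1 = i ∨ k = i ∨ k = i + 1 ∨ k = i + 2 ∨
        (k + 1 ≠ i ∧ k ≠ i ∧ k ≠ i + 1 ∧ k ≠ i + 2) := by omega
  all_goals
    simp (disch := omega) only [betaTilde_eGen_pred, betaTilde_eGen_self, betaTilde_eGen_succ,
      betaTilde_eGen_of_ne, map_mul, map_inv]
  all_goals group

end

theorem betaTilde_braid_relation_general (n d : ℕ) (hn : 2 ≤ n)
    (i : ℕ) (hi2 : i ≤ n - 2) :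
    (betaTilde n d i).comp ((betaTilde n d (i + 1)).comp (betaTilde n d i)) =
      (betaTilde n d (i + 1)).comp ((betaTilde n d i).comp (betaTilde n d (i + 1))) := by
  apply FreeGroup.ext_hom
  rintro ⟨k, j⟩
  simpa only [MonoidHom.comp_apply, eGen_val] using
    betaTilde_braid_eGen (d := d) (by omega) (Nat.le_of_lt_succ k.isLt) j

/-- The lifts `β̃_i` satisfy the braid relation: for each `i` with
`1 ≤ i ≤ n−2`, `β̃_i ∘ β̃_{i+1} ∘ β̃_i = β̃_{i+1} ∘ β̃_i ∘ β̃_{i+1}`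
as endomorphisms of `E`. -/
theorem betaTilde_braid_relation (n d : ℕ) (hn : 2 ≤ n) (hd : 2 ≤ d)
    (i : ℕ) (hi1 : 1 ≤ i) (hi2 : i ≤ n - 2) :
    (betaTilde n d i).comp ((betaTilde n d (i + 1)).comp (betaTilde n d i)) =
      (betaTilde n d (i + 1)).comp ((betaTilde n d i).comp (betaTilde n d (i + 1))) :=
  betaTilde_braid_relation_general n d hn i hi2
end

section
/- For each i with 1 ≤ i ≤ n−1 and each j ∈ ℤ/dℤ, the Dehn twist endomorphism D_{i,j} of E is bijective, i.e., D_{i,j} is an automorphism of E. -/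
/-- The Dehn twist `D_{i,j}` along the loop `x_{i,j}`, as an endomorphism of
the free group `E`, defined on generators by
`e_{i−1,j} ↦ e_{i−1,j}·e_{i,j+1}`, `e_{i−1,k} ↦ e_{i−1,k}·e_{i,j}` for `k ≠ j`,
`e_{i,j} ↦ e_{i,j+1}⁻¹`, `e_{i,j+1} ↦ e_{i,j}⁻¹`,
`e_{i,k} ↦ e_{i,j}⁻¹·e_{i,k}·e_{i,j}⁻¹` for `k ≠ j, j+1`,
`e_{i+1,j+1} ↦ e_{i,j+1}·e_{i+1,j+1}`, `e_{i+1,k} ↦ e_{i,j}·e_{i+1,k}` for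
`k ≠ j+1`, and fixing all generators `e_{m,k}` with `m ∉ {i−1, i, i+1}`. -/
def dehn (n d : ℕ) (i : ℕ) (j : ZMod d) : Egrp n d →* Egrp n d :=
  FreeGroup.lift fun p =>
    let k := p.2
    if (p.1 : ℕ) + 1 = i then
      FreeGroup.of p * (if k = j then eGen n d i (j + 1) else eGen n d i j)
    else if (p.1 : ℕ) = i then
      if k = j then (FreeGroup.of (p.1, j + 1))⁻¹
      else if k = j + 1 then (FreeGroup.of (p.1, j))⁻¹
      else (FreeGroup.of (p.1, j))⁻¹ * FreeGroup.of p * (FreeGroup.of (p.1, j))⁻¹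
    else if (p.1 : ℕ) = i + 1 then
      (if k = j + 1 then eGen n d i (j + 1) else eGen n d i j) * FreeGroup.of p
    else
      FreeGroup.of p


open FreeGroup

namespace Egrp

variable {n d : ℕ} (x : Fin (n + 1)) (j : ZMod d)

def swapGen : Egrp n d ≃* Egrp n d :=
  freeGroupCongr (Equiv.swap (x, j) (x, j + 1))

def dehnSwap : Egrp n d →* Egrp n d :=
  (dehn n d x j).comp (swapGen x j).toMonoidHom

variable {x j}

theorem dehnSwap_of (p : Fin (n + 1) × ZMod d) :
    dehnSwap x j (of p) = dehn n d x j (of (Equiv.swap (x, j) (x, j + 1) p)) := rfl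

theorem dehnSwap_of_self : dehnSwap x j (of (x, j)) = (of (x, j))⁻¹ := by
  by_cases h : j + 1 = j <;> simp [dehnSwap_of, dehn, h]

theorem dehnSwap_of_succ : dehnSwap x j (of (x, j + 1)) = (of (x, j + 1))⁻¹ := by
  simp [dehnSwap_of, dehn]

theorem dehnSwap_of_of_ne {k : ZMod d} (hk : k ≠ j) (hk' : k ≠ j + 1) :
    dehnSwap x j (of (x, k)) = (of (x, j))⁻¹ * of (x, k) * (of (x, j))⁻¹ := by
  simp [dehnSwap_of, dehn, hk, hk', Equiv.swap_apply_of_ne_of_ne]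

theorem dehnSwap_of_of_succ_eq {c : Fin (n + 1)} (hc : (c : ℕ) + 1 = x) (k : ZMod d) :
    dehnSwap x j (of (c, k)) = of (c, k) * of (x, if k = j then j + 1 else j) := by
  have hcx : c ≠ x := by rintro rfl; omega
  rw [dehnSwap_of, Equiv.swap_apply_of_ne_of_ne (by simp [hcx]) (by simp [hcx])]
  split_ifs with hk <;> simp [dehn, eGen, hc, hk]

theorem dehnSwap_of_of_eq_succ {c : Fin (n + 1)} (hc : (c : ℕ) = x + 1) (k : ZMod d) :
    dehnSwap x j (of (c, k)) = of (x, if k = j + 1 then j + 1 else j) * of (c, k) := by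
  have hcx : c ≠ x := by rintro rfl; omega
  have hx : (x : ℕ) + 1 + 1 ≠ x := by omega
  rw [dehnSwap_of, Equiv.swap_apply_of_ne_of_ne (by simp [hcx]) (by simp [hcx])]
  split_ifs with hk <;> simp [dehn, eGen, hc, hx, hk]

theorem dehnSwap_of_of_far {c : Fin (n + 1)} (h₁ : (c : ℕ) + 1 ≠ x) (h₂ : c ≠ x)
    (h₃ : (c : ℕ) ≠ x + 1) (k : ZMod d) : dehnSwap x j (of (c, k)) = of (c, k) := by
  rw [dehnSwap_of, Equiv.swap_apply_of_ne_of_ne (by simp [h₂]) (by simp [h₂])]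
  simp [dehn, h₁, Fin.val_ne_iff.mpr h₂, h₃]

theorem dehnSwap_of_ite (P : Prop) [Decidable P] :
    dehnSwap x j (of (x, if P then j + 1 else j)) = (of (x, if P then j + 1 else j))⁻¹ := by
  split_ifs
  exacts [dehnSwap_of_succ, dehnSwap_of_self]

theorem dehnSwap_involutive : Function.Involutive (dehnSwap x j) := by
  suffices h : (dehnSwap x j).comp (dehnSwap x j) = MonoidHom.id _ from
    fun g => DFunLike.congr_fun h g
  refine FreeGroup.ext_hom _ _ fun ⟨c, k⟩ => ?_
  simp only [MonoidHom.comp_apply, MonoidHom.id_apply]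
  by_cases h₁ : (c : ℕ) + 1 = x
  · simp [dehnSwap_of_of_succ_eq h₁, dehnSwap_of_ite]
  by_cases h₂ : c = x
  · subst h₂
    by_cases hk : k = j
    · simp [hk, dehnSwap_of_self]
    by_cases hk' : k = j + 1
    · simp [hk', dehnSwap_of_succ]
    simp [dehnSwap_of_of_ne hk hk', dehnSwap_of_self, mul_assoc]
  by_cases h₃ : (c : ℕ) = x + 1
  · simp [dehnSwap_of_of_eq_succ h₃, dehnSwap_of_ite, ← mul_assoc]
  simp [dehnSwap_of_of_far h₁ h₂ h₃]

end Egrp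

theorem dehn_bijective_general (n d : ℕ)
    (i : ℕ) (hi2 : i ≤ n - 1) (j : ZMod d) :
    Function.Bijective (dehn n d i j) := by
  obtain ⟨x, rfl⟩ : ∃ x : Fin (n + 1), (x : ℕ) = i := ⟨⟨i, by omega⟩, rfl⟩
  exact (Equiv.bijective_comp (Egrp.swapGen x j).toEquiv _).mp
    Egrp.dehnSwap_involutive.bijective

/-- For each `i` with `1 ≤ i ≤ n−1` and each `j ∈ ℤ/dℤ`, the Dehn twist
endomorphism `D_{i,j}` of `E` is bijective, i.e. `D_{i,j}` is an automorphism
of `E`. -/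
theorem dehn_bijective (n d : ℕ) (hn : 2 ≤ n) (hd : 2 ≤ d)
    (i : ℕ) (hi1 : 1 ≤ i) (hi2 : i ≤ n - 1) (j : ZMod d) :
    Function.Bijective (dehn n d i j) :=
  dehn_bijective_general n d i hi2 j
end
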